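/- arXiv:2411.00207 — 4 statements merged into one kernel-verified Lean document; each statement's English description precedes it below -/
import Mathlib

section
/- Let D be a triangulated category with a t-structure whose heart is H, and let (T, F) be a torsion pair on H. Then the full subcategory F[1] * T (objects E fitting into a triangle F' [1] → E → T' with F' ∈ F and T' ∈ T) is the heart of a t-structure on D (the HRS forward tilt of H at (T,F)). -/
open CategoryTheory CategoryTheory.Limits CategoryTheory.Pretriangulated
  CategoryTheory.Triangulated ZeroObject

namespace Paper

universe w w' v u v₁ u₁ v₂ u₂ v₃ u₃ v₄ u₄

section AbelianPrelim

variable {C : Type u} [Category.{v} C]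

/-- A Serre subcategory of an abelian category, as a predicate on objects:
closed under zero, isomorphisms, and for every short exact sequence the middle
term belongs to it iff the outer terms do (subobjects, quotients, extensions). -/
structure IsSerre [Abelian C] (P : C → Prop) : Prop where
  zero : ∀ X : C, IsZero X → P X
  iso_closed : ∀ {X Y : C}, (X ≅ Y) → P X → P Y
  ses : ∀ S : ShortComplex C, S.ShortExact → (P S.X₂ ↔ P S.X₁ ∧ P S.X₃)

/-- A torsion pair `(T, F)` on an abelian category: `Hom(T,F) = 0` and every object
is an extension of a torsion-free object by a torsion object. -/
structure IsTorsionPair [Abelian C] (T F : C → Prop) : Prop where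
  t_iso : ∀ {X Y : C}, (X ≅ Y) → T X → T Y
  f_iso : ∀ {X Y : C}, (X ≅ Y) → F X → F Y
  hom_zero : ∀ {X Y : C}, T X → F Y → ∀ f : X ⟶ Y, f = 0
  exists_ses : ∀ X : C, ∃ (A B : C) (f : A ⟶ X) (g : X ⟶ B) (w : f ≫ g = 0),
    T A ∧ F B ∧ (ShortComplex.mk f g w).ShortExact

end AbelianPrelim

/-- Essential image of a functor, as a predicate. -/
def EssIm {C : Type u} [Category.{v} C] {D : Type u₁} [Category.{v₁} D]
    (F : C ⥤ D) (Y : D) : Prop := ∃ X : C, Nonempty (F.obj X ≅ Y)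

/-- Essential image of a subcategory (predicate) under a functor. -/
def ImP {C : Type u} [Category.{v} C] {D : Type u₁} [Category.{v₁} D]
    (F : C ⥤ D) (P : C → Prop) (Y : D) : Prop := ∃ X : C, P X ∧ Nonempty (F.obj X ≅ Y)

/-- A recollement `R(A', A, A'')`: adjoint triples `(q, ι, p)` and `(l, π, r)`,
with `ι, l, r` fully faithful and `Im ι = Ker π`. -/
structure RecollementData (A' : Type u) (A : Type u₁) (A'' : Type u₂)
    [Category.{v} A'] [Category.{v₁} A] [Category.{v₂} A''] where
  ι : A' ⥤ A
  π : A ⥤ A''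
  q : A ⥤ A'
  p : A ⥤ A'
  l : A'' ⥤ A
  r : A'' ⥤ A
  adj_q : q ⊣ ι
  adj_p : ι ⊣ p
  adj_l : l ⊣ π
  adj_r : π ⊣ r
  ι_full : ι.Full
  ι_faithful : ι.Faithful
  l_full : l.Full
  l_faithful : l.Faithful
  r_full : r.Full
  r_faithful : r.Faithful
  im_eq_ker : ∀ X : A, EssIm ι X ↔ IsZero (π.obj X)

section TriPrelim

variable {D : Type u} [Category.{v} D] [Preadditive D] [HasZeroObject D] [HasShift D ℤ]
  [∀ n : ℤ, (shiftFunctor D n).Additive] [Pretriangulated D]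

/-- The heart of a t-structure, as a predicate on objects. -/
def heartP (t : TStructure D) (X : D) : Prop := t.le 0 X ∧ t.ge 0 X

/-- Boundedness of a t-structure. -/
def IsBoundedT (t : TStructure D) : Prop := ∀ X : D, ∃ a b : ℤ, t.le b X ∧ t.ge a X

/-- A simple object of the abelian subquotient determined by the heart-like
predicate `H`: any "short exact sequence" in `H` (i.e. distinguished triangle
with all terms in `H`) with middle term `X` is trivial. -/
def SimpleIn (H : D → Prop) (X : D) : Prop :=
  H X ∧ ¬ IsZero X ∧ ∀ (A B : D) (f : A ⟶ X) (g : X ⟶ B) (h : B ⟶ A⟦(1 : ℤ)⟧),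
    H A → H B → Triangle.mk f g h ∈ (distTriang D) → IsZero A ∨ IsZero B

/-- A torsion pair `(T, F)` on the heart-like predicate `H` of a triangulated
category, where short exact sequences in `H` are distinguished triangles. -/
structure TorsionPairIn (H T F : D → Prop) : Prop where
  t_sub : ∀ X : D, T X → H X
  f_sub : ∀ X : D, F X → H X
  t_iso : ∀ {X Y : D}, (X ≅ Y) → T X → T Y
  f_iso : ∀ {X Y : D}, (X ≅ Y) → F X → F Y
  hom_zero : ∀ {X Y : D}, T X → F Y → ∀ f : X ⟶ Y, f = 0
  exists_triangle : ∀ X : D, H X → ∃ (A B : D) (f : A ⟶ X) (g : X ⟶ B)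
    (h : B ⟶ A⟦(1 : ℤ)⟧), T A ∧ F B ∧ Triangle.mk f g h ∈ distTriang D

/-- The forward HRS tilt `F[1] * T` of a heart at a torsion pair `(T, F)`. -/
def TiltSharp (T F : D → Prop) (E : D) : Prop :=
  ∃ (A B : D) (f : A⟦(1 : ℤ)⟧ ⟶ E) (g : E ⟶ B) (h : B ⟶ A⟦(1 : ℤ)⟧⟦(1 : ℤ)⟧),
    F A ∧ T B ∧ Triangle.mk f g h ∈ distTriang D

/-- The backward HRS tilt `F * T[-1]` of a heart at a torsion pair `(T, F)`. -/
def TiltFlat (T F : D → Prop) (E : D) : Prop :=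
  ∃ (A B : D) (f : A ⟶ E) (g : E ⟶ B⟦(-1 : ℤ)⟧) (h : B⟦(-1 : ℤ)⟧ ⟶ A⟦(1 : ℤ)⟧),
    F A ∧ T B ∧ Triangle.mk f g h ∈ distTriang D

/-- `P` is a Serre subcategory of the heart-like predicate `H`, where short
exact sequences in `H` are distinguished triangles with all terms in `H`. -/
def SerreIn (H P : D → Prop) : Prop :=
  (∀ X : D, P X → H X) ∧ (∀ X : D, IsZero X → H X → P X) ∧
  (∀ {X Y : D}, (X ≅ Y) → P X → P Y) ∧
  ∀ (A E B : D) (f : A ⟶ E) (g : E ⟶ B) (h : B ⟶ A⟦(1 : ℤ)⟧),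
    H A → H E → H B → Triangle.mk f g h ∈ (distTriang D) → (P E ↔ P A ∧ P B)

/-- A thick (triangulated, closed under retracts) subcategory, as a predicate. -/
structure IsThick (V : D → Prop) : Prop where
  zero : ∀ X : D, IsZero X → V X
  iso : ∀ {X Y : D}, (X ≅ Y) → V X → V Y
  shift : ∀ (X : D) (n : ℤ), V X → V (X⟦n⟧)
  ext : ∀ (A E B : D) (f : A ⟶ E) (g : E ⟶ B) (h : B ⟶ A⟦(1 : ℤ)⟧),
    Triangle.mk f g h ∈ (distTriang D) → V A → V B → V E
  retract : ∀ (X Z : D) (i : X ⟶ Z) (p : Z ⟶ X), i ≫ p = 𝟙 X → V Z → V X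

/-- The t-structure `t` restricts to the subcategory `V`: truncation triangles of
objects of `V` may be chosen inside `V`. -/
def RestrictsTo (t : TStructure D) (V : D → Prop) : Prop :=
  ∀ A : D, V A → ∃ (X Y : D), t.le 0 X ∧ t.ge 1 Y ∧ V X ∧ V Y ∧
    ∃ (f : X ⟶ A) (g : A ⟶ Y) (h : Y ⟶ X⟦(1 : ℤ)⟧), Triangle.mk f g h ∈ distTriang D

/-- A bounded heart `heartP t` is compatible with `V`: the t-structure restricts to
`V` (so that `heartP t ∩ V` is a bounded heart of `V`) and `heartP t ∩ V` is a
Serre subcategory of `heartP t`. -/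
def CompatibleWith (t : TStructure D) (V : D → Prop) : Prop :=
  RestrictsTo t V ∧ SerreIn (heartP t) (fun X => heartP t X ∧ V X)

/-- Finite length objects of the heart-like predicate `H`: finite iterated
extensions of simple objects of `H`. -/
inductive FinLength (H : D → Prop) : D → Prop
  | zero (X : D) : IsZero X → FinLength H X
  | step (A X B : D) (f : A ⟶ X) (g : X ⟶ B) (h : B ⟶ A⟦(1 : ℤ)⟧) :
      SimpleIn H B → Triangle.mk f g h ∈ (distTriang D) → FinLength H A → FinLength H X

/-- The heart of `t` is a finite (length, with finitely many simples) abelian category. -/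
def FiniteHeart (t : TStructure D) : Prop :=
  (∃ (n : ℕ) (Sim : Fin n → D), ∀ X : D, SimpleIn (heartP t) X → ∃ i, Nonempty (X ≅ Sim i)) ∧
  ∀ X : D, heartP t X → FinLength (heartP t) X

/-- The additive closure (finite direct sums, retracts) of a class of objects. -/
inductive AddClos [HasBinaryBiproducts D] (S : D → Prop) : D → Prop
  | of (X : D) : S X → AddClos S X
  | zero (X : D) : IsZero X → AddClos S X
  | biprod (X Y : D) : AddClos S X → AddClos S Y → AddClos S (X ⊞ Y)
  | retract (X Z : D) (i : X ⟶ Z) (p : Z ⟶ X) : i ≫ p = 𝟙 X → AddClos S Z → AddClos S X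

/-- The class `⟨S⟩` generated by an object `S`: extensions of `Add S` by `Add S`. -/
def GenBy [HasBinaryBiproducts D] (S : D) (X : D) : Prop :=
  ∃ (A B : D) (f : A ⟶ X) (g : X ⟶ B) (h : B ⟶ A⟦(1 : ℤ)⟧),
    AddClos (fun Z => Z = S) A ∧ AddClos (fun Z => Z = S) B ∧
    Triangle.mk f g h ∈ distTriang D

/-- `t'` is the simple forward HRS tilt of `t` at the simple object `S` of its heart. -/
def SimpleForwardTiltRel [HasBinaryBiproducts D] (t t' : TStructure D) (S : D) : Prop :=
  SimpleIn (heartP t) S ∧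
  ∃ T : D → Prop, TorsionPairIn (heartP t) T (GenBy S) ∧
    ∀ X : D, heartP t' X ↔ TiltSharp T (GenBy S) X

/-- The thick closure of a class of objects. -/
inductive ThickClos (S : D → Prop) : D → Prop
  | of (X : D) : S X → ThickClos S X
  | zero (X : D) : IsZero X → ThickClos S X
  | shift (X : D) (n : ℤ) : ThickClos S X → ThickClos S (X⟦n⟧)
  | ext (A E B : D) (f : A ⟶ E) (g : E ⟶ B) (h : B ⟶ A⟦(1 : ℤ)⟧) :
      Triangle.mk f g h ∈ (distTriang D) → ThickClos S A → ThickClos S B → ThickClos S E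
  | retract (X Z : D) (i : X ⟶ Z) (p : Z ⟶ X) : i ≫ p = 𝟙 X → ThickClos S Z → ThickClos S X

/-- `π : D ⥤ Q` realizes `Q` as the Verdier quotient of `D` by the thick
subcategory `V`. -/
structure IsVerdierQuotient {Q : Type u₁} [Category.{v₁} Q] [Preadditive Q]
    [HasZeroObject Q] [HasShift Q ℤ] [∀ n : ℤ, (shiftFunctor Q n).Additive]
    [Pretriangulated Q] (π : D ⥤ Q) (V : D → Prop) : Prop where
  essSurj : ∀ Y : Q, ∃ X : D, Nonempty (π.obj X ≅ Y)
  kernel : ∀ X : D, IsZero (π.obj X) ↔ V X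
  inverts : ∀ (X Y : D) (f : X ⟶ Y) (Z : D) (g : Y ⟶ Z) (h : Z ⟶ X⟦(1 : ℤ)⟧),
    Triangle.mk f g h ∈ (distTriang D) → V Z → IsIso (π.map f)

end TriPrelim

section TExact

variable {D : Type u} [Category.{v} D] [Preadditive D] [HasZeroObject D] [HasShift D ℤ]
  [∀ n : ℤ, (shiftFunctor D n).Additive] [Pretriangulated D]
  {E : Type u₁} [Category.{v₁} E] [Preadditive E] [HasZeroObject E] [HasShift E ℤ]
  [∀ n : ℤ, (shiftFunctor E n).Additive] [Pretriangulated E]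

/-- t-exactness of a functor with respect to t-structures on source and target. -/
def TExact (F : D ⥤ E) (t : TStructure D) (t' : TStructure E) : Prop :=
  (∀ X : D, t.le 0 X → t'.le 0 (F.obj X)) ∧ (∀ X : D, t.ge 0 X → t'.ge 0 (F.obj X))

end TExact

/-- An isomorphism of oriented graphs. -/
structure OGraphIso {V₁ : Type u} {V₂ : Type u₁}
    (E₁ : V₁ → V₁ → Prop) (E₂ : V₂ → V₂ → Prop) where
  toEquiv : V₁ ≃ V₂
  edge_iff : ∀ a b : V₁, E₁ a b ↔ E₂ (toEquiv a) (toEquiv b)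

end Paper

open Paper

universe v u

/-!
The tilted aisle is `U = D^{≤-1} * T`, and the tilted co-aisle `D'^{≥1}` is taken to be the right
orthogonal `U^⊥`. Since `D^{≤-1} ⊆ U ⊆ D^{≤0}` and `F ⊆ U^⊥`, every axiom except the existence of
truncation triangles is formal.

To truncate `A`, take `C₀ → A → B` with `C₀ ∈ D^{≤0}`, `B ∈ D^{≥1}`, then `C₁ → C₀ → H` with
`C₁ ∈ D^{≤-1}` and `H` in the heart, the torsion sequence `tH → H → fH`, and the homotopy pullback
`X ∈ U` of `C₀ → H ← tH`. For `W ∈ U` we have `Hom(W, B) = Hom(W, fH) = 0`, so four-lemma arguments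
on `Hom(W, -)` show that `X → A` is surjective on `Hom(W, -)` and injective on `Hom(W, -[1])`;
hence the cone of `X → A` lies in `U^⊥`. No octahedral axiom is needed.

If `P → E → Q` exhibits `E ∈ U` and `E[-1] ∈ U^⊥`, then `P[-1]` lies in `U^⊥ ∩ D^{≤0}`, which is
`F`; so the heart is `F[1] * T`.
-/

section

variable {D : Type u} [Category.{v} D] [Preadditive D] [HasZeroObject D] [HasShift D ℤ]
  [∀ n : ℤ, (CategoryTheory.shiftFunctor D n).Additive] [Pretriangulated D]

namespace CategoryTheory.Pretriangulated.Triangle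

section

variable {T : Triangle D} (hT : T ∈ distTriang D) {W : D}
include hT

lemma eq_zero_of_comp_shift_mor₁_eq_zero (h₃ : ∀ f : W ⟶ T.obj₃, f = 0)
    (x : W ⟶ T.obj₁⟦(1 : ℤ)⟧) (hx : x ≫ T.mor₁⟦(1 : ℤ)⟧' = 0) : x = 0 := by
  obtain ⟨g, rfl⟩ := T.coyoneda_exact₁ hT x hx
  rw [h₃ g, zero_comp]

lemma eq_zero_of_exists_lift (h₂ : ∀ y : W ⟶ T.obj₂, ∃ x, y = x ≫ T.mor₁)
    (h₁ : ∀ x : W ⟶ T.obj₁⟦(1 : ℤ)⟧, x ≫ T.mor₁⟦(1 : ℤ)⟧' = 0 → x = 0)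
    (f : W ⟶ T.obj₃) : f = 0 := by
  have hf : f ≫ T.mor₃ = 0 :=
    h₁ _ (by rw [Category.assoc, comp_distTriang_mor_zero₃₁ _ hT, comp_zero])
  obtain ⟨y, rfl⟩ := T.coyoneda_exact₃ hT f hf
  obtain ⟨x, rfl⟩ := h₂ y
  rw [Category.assoc, comp_distTriang_mor_zero₁₂ _ hT, comp_zero]

end

section

variable {T₁ T₂ : Triangle D} (φ : T₁ ⟶ T₂) (hT₁ : T₁ ∈ distTriang D) (hT₂ : T₂ ∈ distTriang D)
  {W : D}
include hT₁ hT₂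

lemma exists_lift_hom₂ (h₁ : ∀ y : W ⟶ T₂.obj₁, ∃ x, y = x ≫ φ.hom₁)
    (h₃ : ∀ y : W ⟶ T₂.obj₃, ∃ x, y = x ≫ φ.hom₃)
    (h₁' : ∀ x : W ⟶ T₁.obj₁⟦(1 : ℤ)⟧, x ≫ φ.hom₁⟦(1 : ℤ)⟧' = 0 → x = 0)
    (y : W ⟶ T₂.obj₂) : ∃ x, y = x ≫ φ.hom₂ := by
  obtain ⟨x₃, hx₃⟩ := h₃ (y ≫ T₂.mor₂)
  obtain ⟨x₂, rfl⟩ := T₁.coyoneda_exact₃ hT₁ x₃ (h₁' _ (by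
    rw [Category.assoc, φ.comm₃, ← reassoc_of% hx₃, comp_distTriang_mor_zero₂₃ _ hT₂, comp_zero]))
  obtain ⟨y₁, hy₁⟩ := T₂.coyoneda_exact₂ hT₂ (y - x₂ ≫ φ.hom₂)
    (by rw [Preadditive.sub_comp, Category.assoc, ← φ.comm₂, ← Category.assoc, ← hx₃, sub_self])
  obtain ⟨x₁, rfl⟩ := h₁ y₁
  refine ⟨x₂ + x₁ ≫ T₁.mor₁, ?_⟩
  rw [Preadditive.add_comp, Category.assoc, φ.comm₁, ← Category.assoc, ← hy₁, add_sub_cancel]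

lemma eq_zero_of_comp_hom₃_eq_zero (h₁ : ∀ y : W ⟶ T₂.obj₁, ∃ x, y = x ≫ φ.hom₁)
    (h₂ : ∀ x : W ⟶ T₁.obj₂, x ≫ φ.hom₂ = 0 → x = 0)
    (h₁' : ∀ x : W ⟶ T₁.obj₁⟦(1 : ℤ)⟧, x ≫ φ.hom₁⟦(1 : ℤ)⟧' = 0 → x = 0)
    (x : W ⟶ T₁.obj₃) (hx : x ≫ φ.hom₃ = 0) : x = 0 := by
  obtain ⟨x₂, rfl⟩ := T₁.coyoneda_exact₃ hT₁ x (h₁' _ (by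
    rw [Category.assoc, φ.comm₃, ← Category.assoc, hx, zero_comp]))
  obtain ⟨y₁, hy₁⟩ := T₂.coyoneda_exact₂ hT₂ (x₂ ≫ φ.hom₂)
    (by rw [Category.assoc, ← φ.comm₂, ← Category.assoc, hx])
  obtain ⟨x₁, rfl⟩ := h₁ y₁
  have : x₂ = x₁ ≫ T₁.mor₁ := sub_eq_zero.1 (h₂ _ (by
    rw [Preadditive.sub_comp, hy₁, Category.assoc, Category.assoc, φ.comm₁, sub_self]))
  rw [this, Category.assoc, comp_distTriang_mor_zero₁₂ _ hT₁, comp_zero]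

end

end CategoryTheory.Pretriangulated.Triangle

namespace Paper

lemma tiltSharp_iff_extensionProduct {T F : D → Prop}
    (hF : ∀ {X Y : D}, (X ≅ Y) → F X → F Y) (E : D) :
    TiltSharp T F E ↔ (ObjectProperty.shift F (-1)).extensionProduct T E := by
  constructor
  · rintro ⟨A, B, f, g, h, hA, hB, mem⟩
    exact ⟨_, B, f, g, h, mem, hF ((shiftEquiv D (1 : ℤ)).unitIso.app A) hA, hB⟩
  · rintro ⟨Y, Z, f, g, h, mem, hY, hZ⟩
    let e : Y⟦(-1 : ℤ)⟧⟦(1 : ℤ)⟧ ≅ Y := (shiftEquiv D (1 : ℤ)).counitIso.app Y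
    refine ⟨Y⟦(-1 : ℤ)⟧, Z, e.hom ≫ f, g, h ≫ e.inv⟦(1 : ℤ)⟧', hY, hZ,
      isomorphic_distinguished _ mem _ ?_⟩
    refine Triangle.isoMk _ _ e (Iso.refl _) (Iso.refl _) ?_ ?_ ?_ <;>
      dsimp only [Triangle.mk] <;> simp

namespace TorsionPairIn

variable {t : TStructure D} {T F : D → Prop} (htf : TorsionPairIn (heartP t) T F)
include htf

lemma containsZero : ObjectProperty.ContainsZero T := by
  obtain ⟨A, B, f, g, h, hA, hB, mem⟩ :=
    htf.exists_triangle 0 ⟨t.le_of_isLE 0 0, t.ge_of_isGE 0 0⟩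
  have : IsIso h := (Triangle.isZero₂_iff_isIso₃ _ mem).1 (isZero_zero D)
  have : t.IsLE A 0 := ⟨(htf.t_sub A hA).1⟩
  have := t.isLE_shift A 0 1 (-1)
  have : t.IsLE B (-1) := t.isLE_of_iso (asIso h).symm (-1)
  have : t.IsGE B 0 := ⟨(htf.f_sub B hB).2⟩
  have hA0 : IsZero A := (Triangle.isZero₁_iff _ mem).2
    ⟨(isZero_zero D).eq_of_tgt _ _, (t.isZero B (-1) 0).eq_of_src _ _⟩
  exact ⟨A, hA0, hA⟩

lemma prop_right_of_hom_eq_zero {X : D} (hX : heartP t X)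
    (h : ∀ Y, T Y → ∀ f : Y ⟶ X, f = 0) : F X := by
  obtain ⟨A, B, f, g, δ, hA, hB, mem⟩ := htf.exists_triangle X hX
  have : t.IsLE A 0 := ⟨(htf.t_sub A hA).1⟩
  have : t.IsGE B 0 := ⟨(htf.f_sub B hB).2⟩
  have := t.isGE_shift B 0 (-1) 1
  have hA0 : IsZero A := by
    obtain ⟨r, hr⟩ := Triangle.coyoneda_exact₂ _ (inv_rot_of_distTriang _ mem) (𝟙 A)
      (by change 𝟙 A ≫ f = 0; rw [h A hA f, comp_zero])
    rw [t.zero_of_isLE_of_isGE r 0 1 (by lia) ‹_› ‹_›, zero_comp] at hr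
    exact (IsZero.iff_id_eq_zero A).2 hr
  have : IsIso g := (Triangle.isZero₁_iff_isIso₂ _ mem).1 hA0
  exact htf.f_iso (asIso g).symm hB

end TorsionPairIn

end Paper

namespace CategoryTheory.Triangulated.TStructure

variable (t : TStructure D)

def tiltAisle (T : ObjectProperty D) : ObjectProperty D := (t.le (-1)).extensionProduct T

instance (T : ObjectProperty D) : (t.tiltAisle T).IsClosedUnderIsomorphisms := by
  unfold tiltAisle
  infer_instance

instance (n : ℤ) : (t.le n).ContainsZero := ⟨0, isZero_zero D, t.le_of_isLE 0 n⟩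

lemma le_tiltAisle (T : ObjectProperty D) : T ≤ t.tiltAisle T :=
  ObjectProperty.le_extensionProduct_right _

variable {t} {T F : ObjectProperty D} (htf : TorsionPairIn (heartP t) T F)
include htf

lemma tiltAisle_le_le_zero : t.tiltAisle T ≤ t.le 0 := by
  rintro X ⟨Y, Z, f, g, h, mem, hY, hZ⟩
  exact (t.isLE₂ _ mem 0 ⟨t.le_monotone (by lia) _ hY⟩ ⟨(htf.t_sub Z hZ).1⟩).le

lemma le_neg_one_le_tiltAisle : t.le (-1) ≤ t.tiltAisle T := by
  have := htf.containsZero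
  exact ObjectProperty.le_extensionProduct_left T

lemma ge_one_le_rightOrthogonal_tiltAisle : t.ge 1 ≤ (t.tiltAisle T).rightOrthogonal :=
  fun _ hY _ f hX => t.zero' f (tiltAisle_le_le_zero htf _ hX) hY

lemma rightOrthogonal_tiltAisle_le_ge_zero : (t.tiltAisle T).rightOrthogonal ≤ t.ge 0 := fun X hX =>
  ((t.isGE_iff_orthogonal (-1) 0 (by lia) X).2
    fun _ f hY => hX f (le_neg_one_le_tiltAisle htf _ hY.le)).ge

lemma right_le_rightOrthogonal_tiltAisle : F ≤ (t.tiltAisle T).rightOrthogonal := by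
  have : t.tiltAisle T ≤ F.leftOrthogonal := by
    refine ObjectProperty.extensionProduct_le_of_isTriangulatedClosed₂
      (fun X hX Y f hY => ?_) (fun X hX Y f hY => htf.hom_zero hX hY f)
    exact t.zero_of_isLE_of_isGE f (-1) 0 (by lia) ⟨hX⟩ ⟨(htf.f_sub Y hY).2⟩
  exact fun Y hY X f hX => this X hX f hY

lemma prop_right_of_rightOrthogonal_tiltAisle {X : D} (hX : t.le 0 X)
    (hX' : (t.tiltAisle T).rightOrthogonal X) : F X :=
  htf.prop_right_of_hom_eq_zero ⟨hX, rightOrthogonal_tiltAisle_le_ge_zero htf X hX'⟩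
    fun Y hY f => hX' f (t.le_tiltAisle T Y hY)

lemma exists_triangle_tiltAisle (A : D) :
    ∃ (X Y : D) (f : X ⟶ A) (g : A ⟶ Y) (h : Y ⟶ X⟦(1 : ℤ)⟧), Triangle.mk f g h ∈ distTriang D ∧
      t.tiltAisle T X ∧ (t.tiltAisle T).rightOrthogonal Y := by
  obtain ⟨C₀, B, hC₀, hB, ι, π, δ₁, mem₁⟩ := t.exists_triangle A 0 1 (by lia)
  obtain ⟨C₁, H, hC₁, hH, b, c, δ₂, mem₂⟩ := t.exists_triangle C₀ (-1) 0 (by lia)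
  have hHle : t.le 0 H := (t.isLE₂ _ (rot_of_distTriang _ mem₂) 0 ⟨hC₀⟩
    ⟨t.le_monotone (by lia) _ (t.le_shift (-1) 1 (-2) (by lia) C₁ hC₁)⟩).le
  obtain ⟨tH, fH, j, k, δ₃, htH, hfH, mem₃⟩ := htf.exists_triangle H ⟨hHle, hH⟩
  obtain ⟨X, a, p, mem₄⟩ := distinguished_cocone_triangle₂ (j ≫ δ₂)
  obtain ⟨ρ, hρ₁, hρ₂⟩ : ∃ ρ : X ⟶ C₀, a ≫ ρ = 𝟙 C₁ ≫ b ∧ p ≫ j = ρ ≫ c :=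
    complete_distinguished_triangle_morphism₂ _ _ mem₄ mem₂ (𝟙 C₁) j
      (by dsimp only [Triangle.mk]; simp)
  let φ : Triangle.mk a p (j ≫ δ₂) ⟶ Triangle.mk b c δ₂ :=
    Triangle.homMk _ _ (𝟙 C₁) ρ j hρ₁ hρ₂ (by dsimp only [Triangle.mk]; simp)
  obtain ⟨Y, q, r, mem₅⟩ := distinguished_cocone_triangle (ρ ≫ ι)
  refine ⟨X, Y, ρ ≫ ι, q, r, mem₅, ⟨_, _, _, _, _, mem₄, hC₁, htH⟩, fun W g hW => ?_⟩
  have hB : ∀ f : W ⟶ B, f = 0 := fun f => ge_one_le_rightOrthogonal_tiltAisle htf B hB f hW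
  have hfH : ∀ f : W ⟶ fH, f = 0 := fun f => right_le_rightOrthogonal_tiltAisle htf fH hfH f hW
  have liftj (y : W ⟶ H) := Triangle.coyoneda_exact₂ _ mem₃ y (hfH _)
  have injId (x : W ⟶ C₁⟦(1 : ℤ)⟧) (hx : x ≫ (𝟙 C₁)⟦(1 : ℤ)⟧' = 0) : x = 0 := by
    simpa using hx
  have liftρ := Triangle.exists_lift_hom₂ φ mem₄ mem₂
    (fun y => ⟨y, (Category.comp_id y).symm⟩) liftj injId
  -- rotating twice turns `φ = (𝟙, ρ, j)` into `(j, 𝟙⟦1⟧, ρ⟦1⟧)`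
  have injρ := Triangle.eq_zero_of_comp_hom₃_eq_zero ((rotate D).map ((rotate D).map φ))
    (rot_of_distTriang _ (rot_of_distTriang _ mem₄))
    (rot_of_distTriang _ (rot_of_distTriang _ mem₂))
    liftj injId (Triangle.eq_zero_of_comp_shift_mor₁_eq_zero mem₃ hfH)
  refine Triangle.eq_zero_of_exists_lift mem₅ (fun y => ?_)
    (fun (x : W ⟶ X⟦(1 : ℤ)⟧) (hx : x ≫ (ρ ≫ ι)⟦(1 : ℤ)⟧' = 0) => ?_) g
  · obtain ⟨y₁, rfl⟩ := Triangle.coyoneda_exact₂ _ mem₁ y (hB _)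
    obtain ⟨x, rfl⟩ := liftρ y₁
    exact ⟨x, Category.assoc _ _ _⟩
  · refine injρ x (Triangle.eq_zero_of_comp_shift_mor₁_eq_zero mem₁ hB _ ?_)
    exact (by simpa using hx : (x ≫ ρ⟦(1 : ℤ)⟧') ≫ ι⟦(1 : ℤ)⟧' = 0)

def tilt : TStructure D where
  le n := (t.tiltAisle T).shift n
  ge n := (t.tiltAisle T).rightOrthogonal.shift (n - 1)
  le_shift n a n' h X hX := by
    rwa [← ObjectProperty.shift_shift _ a n' n h] at hX
  ge_shift n a n' h X hX := by
    rwa [← ObjectProperty.shift_shift _ a (n' - 1) (n - 1) (by lia)] at hX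
  zero' X Y f hX hY := by
    rw [ObjectProperty.shift_zero] at hX
    rw [sub_self, ObjectProperty.shift_zero] at hY
    exact hY f hX
  le_zero_le X hX := by
    rw [ObjectProperty.shift_zero] at hX
    exact le_neg_one_le_tiltAisle htf _
      (t.le_shift 0 1 (-1) (by lia) X (tiltAisle_le_le_zero htf X hX))
  ge_one_le X hX := by
    rw [sub_self, ObjectProperty.shift_zero] at hX
    exact ge_one_le_rightOrthogonal_tiltAisle htf _
      (t.ge_shift 0 (0 - 1) 1 (by lia) X (rightOrthogonal_tiltAisle_le_ge_zero htf X hX))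
  exists_triangle_zero_one A := by
    obtain ⟨X, Y, f, g, h, mem, hX, hY⟩ := exists_triangle_tiltAisle htf A
    refine ⟨X, Y, ?_, ?_, f, g, h, mem⟩
    · rwa [ObjectProperty.shift_zero]
    · rwa [sub_self, ObjectProperty.shift_zero]

lemma heartP_tilt_iff (E : D) :
    heartP (tilt htf) E ↔ (ObjectProperty.shift F (-1)).extensionProduct T E := by
  change (t.tiltAisle T).shift 0 E ∧ (t.tiltAisle T).rightOrthogonal.shift (0 - 1) E ↔ _
  rw [ObjectProperty.shift_zero, zero_sub]
  constructor
  · rintro ⟨⟨P, Q, u, v, w, mem, hP, hQ⟩, hE⟩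
    refine ⟨P, Q, u, v, w, mem, prop_right_of_rightOrthogonal_tiltAisle htf
      (t.le_shift (-1) (-1) 0 (by lia) P hP) ?_, hQ⟩
    refine ObjectProperty.ext_of_isTriangulatedClosed₂ _ _
      (inv_rot_of_distTriang _ (Triangle.shift_distinguished _ mem (-1))) ?_ hE
    exact ge_one_le_rightOrthogonal_tiltAisle htf _ (t.ge_antitone (by lia) _
      (t.ge_shift 1 (-1) 2 (by lia) _ (t.ge_shift 0 (-1) 1 (by lia) Q (htf.t_sub Q hQ).2)))
  · rintro ⟨Y, Z, f, g, h, mem, hY, hZ⟩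
    refine ⟨⟨Y, Z, f, g, h, mem, ((t.isLE_shift_iff Y (-1) (-1) 0).1 ⟨(htf.f_sub _ hY).1⟩).le, hZ⟩,
      ObjectProperty.ext_of_isTriangulatedClosed₂ _ _ (Triangle.shift_distinguished _ mem (-1))
        (right_le_rightOrthogonal_tiltAisle htf _ hY) ?_⟩
    exact ge_one_le_rightOrthogonal_tiltAisle htf _
      (t.ge_shift 0 (-1) 1 (by lia) Z (htf.t_sub Z hZ).2)

end CategoryTheory.Triangulated.TStructure

end

/-- HRS tilting: given a t-structure with heart `H` on a
triangulated category `D` and a torsion pair `(T, F)` on `H`, the full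
subcategory `F[1] * T` is the heart of a t-structure on `D`. -/
theorem statement2 {D : Type u} [Category.{v} D] [Preadditive D] [HasZeroObject D]
    [HasShift D ℤ] [∀ n : ℤ, (shiftFunctor D n).Additive] [Pretriangulated D]
    (t : TStructure D) (T F : D → Prop)
    (htf : TorsionPairIn (heartP t) T F) :
    ∃ t' : TStructure D, ∀ E : D, heartP t' E ↔ TiltSharp T F E :=
  ⟨TStructure.tilt htf, fun E =>
    (TStructure.heartP_tilt_iff htf E).trans (tiltSharp_iff_extensionProduct htf.f_iso E).symm⟩
end

section
/- Let π : D → D/V be a Verdier quotient of triangulated categories, and let H and H' be bounded hearts of D that are both compatible with V (i.e., H ∩ V is a bounded heart of V and a Serre subcategory of H, and likewise for H'). If H' is the forward HRS tilt of H at a torsion-free class F with F ⊆ V, then the induced quotient hearts H/(H ∩ V) and H'/(H' ∩ V) coincide as hearts in D/V. -/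
/-!
Every object of `H` is an extension of an object of `F` by its torsion part, and every object of
`H' = F[1] * T` is an extension of its torsion part by an object of `F[1]`. Since `F ⊆ V`, the
quotient functor inverts both comparison maps, so the images of `H` and of `H'` in `D/V` are both
the image of `T`.
-/

open CategoryTheory CategoryTheory.Limits CategoryTheory.Pretriangulated
  CategoryTheory.Triangulated ZeroObject

open Paper

universe v u v₁ u₁

namespace Paper

variable {D : Type u} [Category.{v} D] [Preadditive D] [HasZeroObject D] [HasShift D ℤ]
  [∀ n : ℤ, (shiftFunctor D n).Additive] [Pretriangulated D]

lemma heartP_of_isZero (t : TStructure D) {X : D} (hX : IsZero X) : heartP t X :=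
  ⟨(t.isLE_of_isZero hX 0).le, (t.isGE_of_isZero hX 0).ge⟩

lemma TorsionPairIn.exists_isZero_free {t : TStructure D} {T F : D → Prop}
    (htf : TorsionPairIn (heartP t) T F) : ∃ Z : D, IsZero Z ∧ F Z := by
  obtain ⟨A, B, f, g, h, hA, hB, mem⟩ :=
    htf.exists_triangle 0 (heartP_of_isZero t (isZero_zero D))
  have : IsIso h := (Triangle.isZero₂_iff_isIso₃ _ mem).1 (isZero_zero D)
  -- `B ≅ A⟦1⟧` lies both in degrees `≤ -1` and `≥ 0`
  have : t.IsLE B (-1) :=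
    ⟨(t.le (-1)).prop_of_iso (asIso h).symm
      (t.le_shift 0 1 (-1) (by norm_num) A (htf.t_sub A hA).1)⟩
  have : t.IsGE B 0 := ⟨(htf.f_sub B hB).2⟩
  exact ⟨B, t.isZero B (-1) 0, hB⟩

lemma tiltSharp_of_torsion {T F : D → Prop} {Z X : D} (hZ : IsZero Z) (hFZ : F Z) (hX : T X) :
    TiltSharp T F X := by
  refine ⟨Z, X, 0, 𝟙 X, 0, hFZ, hX, isomorphic_distinguished _ (contractible_distinguished₁ X) _
    (Triangle.isoMk _ _ (((shiftFunctor D (1 : ℤ)).map_isZero hZ).iso (isZero_zero D))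
      (Iso.refl _) (Iso.refl _) ?_ ?_ ?_)⟩ <;> simp [Triangle.mk]

section Quotient

variable {Q : Type u₁} [Category.{v₁} Q] [Preadditive Q] [HasZeroObject Q] [HasShift Q ℤ]
  [∀ n : ℤ, (shiftFunctor Q n).Additive] [Pretriangulated Q]
  {π : D ⥤ Q} {V : D → Prop} (hπ : IsVerdierQuotient π V)
include hπ

lemma imP_iff_imP_torsion {H T F : D → Prop} (htf : TorsionPairIn H T F)
    (hFV : ∀ X : D, F X → V X) (Y : Q) : ImP π H Y ↔ ImP π T Y := by
  refine ⟨fun ⟨X, hX, ⟨e⟩⟩ => ?_, fun ⟨X, hX, he⟩ => ⟨X, htf.t_sub X hX, he⟩⟩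
  obtain ⟨A, B, f, g, h, hA, hB, mem⟩ := htf.exists_triangle X hX
  have : IsIso (π.map f) := hπ.inverts A X f B g h mem (hFV B hB)
  exact ⟨A, hA, ⟨asIso (π.map f) ≪≫ e⟩⟩

lemma imP_tiltSharp_iff_imP_torsion (hV : ∀ (X : D) (n : ℤ), V X → V (X⟦n⟧))
    {T F : D → Prop} (hFV : ∀ X : D, F X → V X) (hF : ∃ Z : D, IsZero Z ∧ F Z) (Y : Q) :
    ImP π (TiltSharp T F) Y ↔ ImP π T Y := by
  obtain ⟨Z, hZ, hFZ⟩ := hF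
  refine ⟨fun ⟨X, hX, ⟨e⟩⟩ => ?_,
    fun ⟨X, hX, he⟩ => ⟨X, tiltSharp_of_torsion hZ hFZ hX, he⟩⟩
  obtain ⟨A, B, f, g, h, hA, hB, mem⟩ := hX
  have : IsIso (π.map g) := hπ.inverts X B g _ h (-f⟦(1 : ℤ)⟧') (rot_of_distTriang _ mem)
    (hV _ 1 (hV _ 1 (hFV A hA)))
  exact ⟨B, hB, ⟨(asIso (π.map g)).symm ≪≫ e⟩⟩

end Quotient

end Paper

/-- Let `π : D ⥤ Q` be the Verdier quotient by a thick
subcategory `V`, and let `t`, `t'` be bounded hearts of `D` compatible with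
`V`. If `heartP t'` is the forward HRS tilt of `heartP t` at a torsion-free
class `F ⊆ V`, then the two induced quotient hearts in `Q` coincide. -/
theorem statement4
    {D : Type u} [Category.{v} D] [Preadditive D] [HasZeroObject D] [HasShift D ℤ]
    [∀ n : ℤ, (shiftFunctor D n).Additive] [Pretriangulated D]
    {Q : Type u₁} [Category.{v₁} Q] [Preadditive Q] [HasZeroObject Q] [HasShift Q ℤ]
    [∀ n : ℤ, (shiftFunctor Q n).Additive] [Pretriangulated Q]
    (V : D → Prop) (hV : IsThick V)
    (π : D ⥤ Q) [π.CommShift ℤ] [π.IsTriangulated]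
    (hπ : IsVerdierQuotient π V)
    (t t' : TStructure D) (hb : IsBoundedT t) (hb' : IsBoundedT t')
    (hc : CompatibleWith t V) (hc' : CompatibleWith t' V)
    (T F : D → Prop) (htf : TorsionPairIn (heartP t) T F)
    (hFV : ∀ X : D, F X → V X)
    (htilt : ∀ X : D, heartP t' X ↔ TiltSharp T F X) :
    ∀ Y : Q, ImP π (heartP t) Y ↔ ImP π (heartP t') Y := by
  intro Y
  have hheart' : heartP t' = TiltSharp T F := funext fun X => propext (htilt X)
  rw [imP_iff_imP_torsion hπ htf hFV, hheart',
    imP_tiltSharp_iff_imP_torsion hπ hV.shift hFV htf.exists_isZero_free]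
end

section
/- In a recollement of abelian categories R(A', A, A'') with functors (q, ι, p) and (ℓ, π, r), for any torsion pair (X, Y) in A: (i) the pair (q(X), p(Y)) is a torsion pair in A'; (ii) the pair (π(X), π(Y)) is a torsion pair in A'' if and only if ℓπ(X) ⊆ X, if and only if rπ(Y) ⊆ Y. -/
open CategoryTheory CategoryTheory.Limits CategoryTheory.Pretriangulated
  CategoryTheory.Triangulated ZeroObject

open Paper

universe v u v₁ u₁ v₂ u₂

/-!
All three parts come down to adjunction isomorphisms of Hom-groups and exactness of `π` and `ι`.

(i) `Hom(q x, p y) ≅ Hom(ι q x, y)` embeds into `Hom(x, y) = 0`, because the unit `x → ι q x` is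
epi: its cokernel is a quotient of an object of `Im ι = Ker π`, hence lies in `Im ι`, where `q` is
inverse to `ι`, and `q` kills it. The torsion sequence of `ι M` also lies in `Ker π`, so it comes
from a short exact sequence in `A'`, on whose terms `q` and `p` act as the identity.

(ii) Each of the three conditions is equivalent to `Hom(π X, π Y) = 0`. Via `ℓ ⊣ π` this vanishing
is `Hom(ℓ π X, Y) = 0`; it forces the torsion-free quotient of `ℓ π x` to be zero, so `ℓ π x` is
torsion. Dually via `π ⊣ r`. Torsion sequences in `A''` are images under `π` of those of `ℓ M`.
-/

namespace CategoryTheory.Adjunction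

variable {C : Type u} [Category.{v} C] [Preadditive C]
  {D : Type u₁} [Category.{v₁} D] [Preadditive D] {F : C ⥤ D} {G : D ⥤ C}

lemma homEquiv_eq_zero_iff (adj : F ⊣ G) {x : C} {y : D} (f : F.obj x ⟶ y) :
    adj.homEquiv x y f = 0 ↔ f = 0 := by
  have := adj.isRightAdjoint
  rw [← (adj.homEquiv x y).injective.eq_iff, adj.homEquiv_apply, adj.homEquiv_apply,
    G.map_zero, comp_zero]

lemma homEquiv_symm_eq_zero_iff (adj : F ⊣ G) {x : C} {y : D} (f : x ⟶ G.obj y) :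
    (adj.homEquiv x y).symm f = 0 ↔ f = 0 := by
  rw [← adj.homEquiv_eq_zero_iff, Equiv.apply_symm_apply]

end CategoryTheory.Adjunction

namespace Paper

section TorsionPair

variable {C : Type u} [Category.{v} C] {D : Type u₁} [Category.{v₁} D]

lemma ImP.of_iso {F : C ⥤ D} {P : C → Prop} {M N : D} (h : ImP F P M) (e : M ≅ N) :
    ImP F P N :=
  let ⟨x, hx, ⟨i⟩⟩ := h
  ⟨x, hx, ⟨i ≪≫ e⟩⟩

lemma ImP.obj (F : C ⥤ D) {P : C → Prop} {x : C} (hx : P x) : ImP F P (F.obj x) :=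
  ⟨x, hx, ⟨Iso.refl _⟩⟩

variable [Abelian D]

lemma exists_shortExact_of_iso {T F : D → Prop} {M N : D} (e : M ≅ N)
    (h : ∃ (A B : D) (f : A ⟶ M) (g : M ⟶ B) (w : f ≫ g = 0),
      T A ∧ F B ∧ (ShortComplex.mk f g w).ShortExact) :
    ∃ (A B : D) (f : A ⟶ N) (g : N ⟶ B) (w : f ≫ g = 0),
      T A ∧ F B ∧ (ShortComplex.mk f g w).ShortExact := by
  obtain ⟨A, B, f, g, w, hA, hB, hS⟩ := h
  refine ⟨A, B, f ≫ e.hom, e.inv ≫ g, by simp [w], hA, hB, ?_⟩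
  exact ShortComplex.shortExact_of_iso
    (ShortComplex.isoMk (Iso.refl A) e (Iso.refl B) (by simp) (by simp)) hS

lemma isTorsionPair_imP {X Y : C → Prop} {F G : C ⥤ D}
    (hom_zero : ∀ ⦃x y : C⦄, X x → Y y → ∀ f : F.obj x ⟶ G.obj y, f = 0)
    (exists_ses : ∀ M : D, ∃ (A B : D) (f : A ⟶ M) (g : M ⟶ B) (w : f ≫ g = 0),
      ImP F X A ∧ ImP G Y B ∧ (ShortComplex.mk f g w).ShortExact) :
    IsTorsionPair (ImP F X) (ImP G Y) where
  t_iso e h := h.of_iso e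
  f_iso e h := h.of_iso e
  hom_zero := by
    rintro a b ⟨x, hx, ⟨i⟩⟩ ⟨y, hy, ⟨j⟩⟩ f
    simpa using congrArg (i.inv ≫ · ≫ j.hom) (hom_zero hx hy (i.hom ≫ f ≫ j.inv))
  exists_ses := exists_ses

end TorsionPair

section Quotient

variable {C : Type u} [Category.{v} C] [Abelian C] {D : Type u₁} [Category.{v₁} D] [Abelian D]
  {X Y : C → Prop} {π : C ⥤ D}

lemma IsTorsionPair.hom_map_eq_zero_iff_of_adjunction_left (hXY : IsTorsionPair X Y)
    {l : D ⥤ C} (adj : l ⊣ π) :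
    (∀ ⦃x y : C⦄, X x → Y y → ∀ f : π.obj x ⟶ π.obj y, f = 0) ↔
      ∀ x : C, X x → X (l.obj (π.obj x)) := by
  constructor
  · intro hπ x hx
    obtain ⟨t, b, f, g, w, ht, hb, hS⟩ := hXY.exists_ses (l.obj (π.obj x))
    have hg : g = 0 := by
      rw [← adj.homEquiv_eq_zero_iff]
      exact hπ hx hb _
    have := hS.epi_g
    have : IsIso f := hS.isIso_f_iff.2 (IsZero.of_epi_eq_zero g hg)
    exact hXY.t_iso (asIso f) ht
  · intro hl x y hx hy f
    rw [← adj.homEquiv_symm_eq_zero_iff]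
    exact hXY.hom_zero (hl x hx) hy _

lemma IsTorsionPair.hom_map_eq_zero_iff_of_adjunction_right (hXY : IsTorsionPair X Y)
    {r : D ⥤ C} (adj : π ⊣ r) :
    (∀ ⦃x y : C⦄, X x → Y y → ∀ f : π.obj x ⟶ π.obj y, f = 0) ↔
      ∀ y : C, Y y → Y (r.obj (π.obj y)) := by
  constructor
  · intro hπ y hy
    obtain ⟨t, b, f, g, w, ht, hb, hS⟩ := hXY.exists_ses (r.obj (π.obj y))
    have hf : f = 0 := by
      rw [← adj.homEquiv_symm_eq_zero_iff]
      exact hπ ht hy _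
    have := hS.mono_f
    have : IsIso g := hS.isIso_g_iff.2 (IsZero.of_mono_eq_zero f hf)
    exact hXY.f_iso (asIso g).symm hb
  · intro hr x y hx hy f
    rw [← adj.homEquiv_eq_zero_iff]
    exact hXY.hom_zero hx (hr y hy) _

lemma IsTorsionPair.isTorsionPair_imP_iff (hXY : IsTorsionPair X Y) {l : D ⥤ C} (adj : l ⊣ π)
    [l.Full] [l.Faithful] [PreservesFiniteLimits π] [PreservesFiniteColimits π] :
    IsTorsionPair (ImP π X) (ImP π Y) ↔
      ∀ ⦃x y : C⦄, X x → Y y → ∀ f : π.obj x ⟶ π.obj y, f = 0 := by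
  refine ⟨fun h x y hx hy => h.hom_zero (.obj π hx) (.obj π hy), fun hπ => ?_⟩
  refine isTorsionPair_imP hπ fun M => exists_shortExact_of_iso (asIso (adj.unit.app M)).symm ?_
  obtain ⟨t, b, f, g, w, ht, hb, hS⟩ := hXY.exists_ses (l.obj M)
  exact ⟨_, _, π.map f, π.map g, by rw [← π.map_comp, w, π.map_zero],
    .obj π ht, .obj π hb, hS.map_of_exact π⟩

end Quotient

section Subcategory

variable {A' : Type u} [Category.{v} A'] [Abelian A'] {A : Type u₁} [Category.{v₁} A] [Abelian A]
  {ι : A' ⥤ A}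

lemma IsTorsionPair.hom_eq_zero_of_epi_unit {X Y : A → Prop} (hXY : IsTorsionPair X Y)
    {q p : A ⥤ A'} (adj_q : q ⊣ ι) (adj_p : ι ⊣ p) {x y : A} (hx : X x) (hy : Y y)
    [Epi (adj_q.unit.app x)] (g : q.obj x ⟶ p.obj y) : g = 0 := by
  rw [← adj_p.homEquiv_symm_eq_zero_iff, ← cancel_epi (adj_q.unit.app x), comp_zero]
  exact hXY.hom_zero hx hy _

variable [ι.Full] [ι.Faithful]

lemma epi_unit_app_of_essIm_closed_under_quotients {q : A ⥤ A'} (adj : q ⊣ ι)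
    (hquot : ∀ {a : A'} {c : A} (g : ι.obj a ⟶ c), Epi g → EssIm ι c) (x : A) :
    Epi (adj.unit.app x) := by
  have := adj.isLeftAdjoint
  set η := adj.unit.app x
  obtain ⟨d, ⟨φ⟩⟩ := hquot (cokernel.π η) inferInstance
  have hq : q.map (cokernel.π η) = 0 := by
    rw [← cancel_epi (q.map η), ← q.map_comp, cokernel.condition, q.map_zero, comp_zero]
  have hd : IsZero d :=
    (IsZero.of_epi_eq_zero _ hq).of_iso ((asIso (adj.counit.app d)).symm ≪≫ q.mapIso φ)
  exact Abelian.epi_of_cokernel_π_eq_zero _ (((ι.map_isZero hd).of_iso φ.symm).eq_of_tgt _ _)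

lemma exists_shortExact_lift [ι.PreservesZeroMorphisms] {S : ShortComplex A} (hS : S.ShortExact)
    {a m b : A'} (e₁ : ι.obj a ≅ S.X₁) (e₂ : ι.obj m ≅ S.X₂) (e₃ : ι.obj b ≅ S.X₃) :
    ∃ (f : a ⟶ m) (g : m ⟶ b) (w : f ≫ g = 0), (ShortComplex.mk f g w).ShortExact := by
  let f := ι.preimage (e₁.hom ≫ S.f ≫ e₂.inv)
  let g := ι.preimage (e₂.hom ≫ S.g ≫ e₃.inv)
  have w : f ≫ g = 0 := ι.map_injective (by simp [f, g])
  refine ⟨f, g, w, ShortExact.reflects_shortExact_of_faithful ι ?_⟩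
  refine ShortComplex.shortExact_of_iso (ShortComplex.isoMk e₁.symm e₂.symm e₃.symm ?_ ?_) hS
  · simp only [f, ShortComplex.map_f, Functor.map_preimage]
    exact e₁.inv_hom_id_assoc _
  · simp only [g, ShortComplex.map_g, Functor.map_preimage]
    exact e₂.inv_hom_id_assoc _

end Subcategory

namespace RecollementData

variable {A' : Type u} [Category.{v} A'] {A : Type u₁} [Category.{v₁} A] [Abelian A]
  {A'' : Type u₂} [Category.{v₂} A''] [Abelian A''] (R : RecollementData A' A A'')
  {X Y : A → Prop}

attribute [instance] ι_full ι_faithful l_full l_faithful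

instance : R.π.IsLeftAdjoint := R.adj_r.isLeftAdjoint
instance : R.π.IsRightAdjoint := R.adj_l.isRightAdjoint
instance : R.ι.IsLeftAdjoint := R.adj_p.isLeftAdjoint
instance : R.ι.IsRightAdjoint := R.adj_q.isRightAdjoint

lemma essIm_ι_of_epi {a : A'} {c : A} (g : R.ι.obj a ⟶ c) [Epi g] : EssIm R.ι c :=
  (R.im_eq_ker c).2 (IsZero.of_epi (R.π.map g) ((R.im_eq_ker _).1 ⟨a, ⟨Iso.refl _⟩⟩))

lemma essIm_ι_of_mono {a : A'} {c : A} (f : c ⟶ R.ι.obj a) [Mono f] : EssIm R.ι c :=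
  (R.im_eq_ker c).2 (IsZero.of_mono (R.π.map f) ((R.im_eq_ker _).1 ⟨a, ⟨Iso.refl _⟩⟩))

lemma epi_unit_app_q [Abelian A'] (x : A) : Epi (R.adj_q.unit.app x) :=
  epi_unit_app_of_essIm_closed_under_quotients R.adj_q (fun g _ => R.essIm_ι_of_epi g) x

theorem isTorsionPair_q_p [Abelian A'] (hXY : IsTorsionPair X Y) :
    IsTorsionPair (ImP R.q X) (ImP R.p Y) := by
  refine isTorsionPair_imP (fun x y hx hy => ?_) fun M => ?_
  · have := R.epi_unit_app_q x
    exact hXY.hom_eq_zero_of_epi_unit R.adj_q R.adj_p hx hy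
  obtain ⟨t, b, f, g, w, ht, hb, hS⟩ := hXY.exists_ses (R.ι.obj M)
  have := hS.mono_f
  have := hS.epi_g
  obtain ⟨t', ⟨et⟩⟩ := R.essIm_ι_of_mono f
  obtain ⟨b', ⟨eb⟩⟩ := R.essIm_ι_of_epi g
  obtain ⟨f', g', w', hS'⟩ := exists_shortExact_lift hS et (Iso.refl _) eb
  exact ⟨t', b', f', g', w',
    (ImP.obj R.q ht).of_iso (R.q.mapIso et.symm ≪≫ asIso (R.adj_q.counit.app t')),
    (ImP.obj R.p hb).of_iso (R.p.mapIso eb.symm ≪≫ (asIso (R.adj_p.unit.app b')).symm), hS'⟩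

theorem isTorsionPair_π_iff_l (hXY : IsTorsionPair X Y) :
    IsTorsionPair (ImP R.π X) (ImP R.π Y) ↔ ∀ x : A, X x → X (R.l.obj (R.π.obj x)) :=
  (hXY.isTorsionPair_imP_iff R.adj_l).trans (hXY.hom_map_eq_zero_iff_of_adjunction_left R.adj_l)

theorem isTorsionPair_π_iff_r (hXY : IsTorsionPair X Y) :
    IsTorsionPair (ImP R.π X) (ImP R.π Y) ↔ ∀ y : A, Y y → Y (R.r.obj (R.π.obj y)) :=
  (hXY.isTorsionPair_imP_iff R.adj_l).trans (hXY.hom_map_eq_zero_iff_of_adjunction_right R.adj_r)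

end RecollementData

end Paper

/-- Psaroudakis. In a recollement of abelian categories
`R(A', A, A'')`, for any torsion pair `(X, Y)` in `A`: (i) `(q(X), p(Y))` is a
torsion pair in `A'`; (ii) `(π(X), π(Y))` is a torsion pair in `A''` iff
`ℓπ(X) ⊆ X` iff `rπ(Y) ⊆ Y`. -/
theorem statement6
    {A' : Type u} [Category.{v} A'] [Abelian A']
    {A : Type u₁} [Category.{v₁} A] [Abelian A]
    {A'' : Type u₂} [Category.{v₂} A''] [Abelian A'']
    (R : RecollementData A' A A'')
    (X Y : A → Prop) (hXY : IsTorsionPair X Y) :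
    IsTorsionPair (ImP R.q X) (ImP R.p Y) ∧
    (IsTorsionPair (ImP R.π X) (ImP R.π Y) ↔ ∀ a : A, X a → X (R.l.obj (R.π.obj a))) ∧
    (IsTorsionPair (ImP R.π X) (ImP R.π Y) ↔ ∀ a : A, Y a → Y (R.r.obj (R.π.obj a))) :=
  ⟨R.isTorsionPair_q_p hXY, R.isTorsionPair_π_iff_l hXY, R.isTorsionPair_π_iff_r hXY⟩
end

section
/- There is a canonical bijection between the set of silting objects of per(eΓe) and the set of V-perpendicular partial silting objects of per(Γ), where V = pvd(Γ_I): every silting object of per(eΓe), viewed inside per(Γ) via the fully faithful functor ℓ, is a partial silting object X with Hom(X, V) = 0 and thick(X) = ^⊥V, and conversely. -/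
open CategoryTheory CategoryTheory.Limits CategoryTheory.Pretriangulated
  CategoryTheory.Triangulated ZeroObject

section SiltingDefs

open Paper

variable {PP : Type*} [Category PP] [Preadditive PP] [HasZeroObject PP] [HasShift PP ℤ]
  [∀ n : ℤ, (shiftFunctor PP n).Additive] [Pretriangulated PP] [HasBinaryBiproducts PP]

/-- `Hom^{>0}(X, Y) = 0`. -/
def NoPosExt (X Y : PP) : Prop := ∀ m : ℤ, 0 < m → ∀ f : X ⟶ Y⟦m⟧, f = 0

/-- An indecomposable (nonzero) object. -/
def IndecObj (X : PP) : Prop :=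
  ¬ IsZero X ∧ ∀ (A B : PP), (X ≅ A ⊞ B) → IsZero A ∨ IsZero B

/-- A (basic) partial silting object, presented as a family of pairwise
non-isomorphic indecomposable summands with no positive self-extensions. -/
structure IsPartialSiltingFam {n : ℕ} (Y : Fin n → PP) : Prop where
  indec : ∀ i, IndecObj (Y i)
  pairwise_noniso : ∀ i j, i ≠ j → IsEmpty (Y i ≅ Y j)
  no_pos_ext : ∀ i j, NoPosExt (Y i) (Y j)

/-- A (basic) silting object: a partial silting family which generates. -/
def IsSiltingFam {n : ℕ} (Y : Fin n → PP) : Prop :=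
  IsPartialSiltingFam Y ∧ ∀ X : PP, ThickClos (fun Z => ∃ i, Z = Y i) X

/-- `f : X ⟶ B` is a minimal left approximation of `X` by the class `A`. -/
def MinLeftApprox (X : PP) (A : PP → Prop) {B : PP} (f : X ⟶ B) : Prop :=
  A B ∧ (∀ B' : PP, A B' → ∀ g : X ⟶ B', ∃ h : B ⟶ B', f ≫ h = g) ∧
  (∀ h : B ⟶ B, f ≫ h = f → IsIso h)

/-- Forward silting mutation at the `kk`-th summand: the summand is replaced
by the cone of its minimal left approximation by the additive closure of the
other summands. -/
def ForwardMutationAt {n : ℕ} (Y Y' : Fin n → PP) (kk : Fin n) : Prop :=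
  (∀ i, i ≠ kk → Y' i = Y i) ∧
  ∃ (B : PP) (f : Y kk ⟶ B) (g : B ⟶ Y' kk) (h : Y' kk ⟶ (Y kk)⟦(1 : ℤ)⟧),
    MinLeftApprox (Y kk) (AddClos (fun Z => ∃ i, i ≠ kk ∧ Z = Y i)) f ∧
    Triangle.mk f g h ∈ distTriang PP

/-- Two families present the same silting object (up to permutation and
isomorphism of the summands). -/
def SiltFamEquiv {n : ℕ} (Y Y' : Fin n → PP) : Prop :=
  ∃ σ : Equiv.Perm (Fin n), ∀ i, Nonempty (Y (σ i) ≅ Y' i)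

/-- A forward mutation edge. -/
def MutEdge {n : ℕ} (Y Y' : Fin n → PP) : Prop := ∃ kk, ForwardMutationAt Y Y' kk

/-- Connectedness to the distinguished silting object by mutations. -/
def SiltReach {n : ℕ} (Y₀ Y : Fin n → PP) : Prop :=
  Relation.ReflTransGen (fun a b => MutEdge a b ∨ MutEdge b a ∨ SiltFamEquiv a b) Y₀ Y

/-- Underlying silting families of the principal component `SEG°`. -/
abbrev SEGVert {n : ℕ} (Y₀ : Fin n → PP) : Type _ :=
  {Y : Fin n → PP // IsSiltingFam Y ∧ SiltReach Y₀ Y}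

/-- The relation identifying families presenting the same silting object. -/
def SEGRel {n : ℕ} (Y₀ : Fin n → PP) (a b : SEGVert Y₀) : Prop := SiltFamEquiv a.1 b.1

/-- Vertices of the principal component `SEG°` of the silting exchange graph. -/
abbrev SEGV {n : ℕ} (Y₀ : Fin n → PP) : Type _ := Quot (SEGRel Y₀)

/-- Edges of `SEG°`: forward silting mutations. -/
def SEGEdge {n : ℕ} (Y₀ : Fin n → PP) (x y : SEGV Y₀) : Prop :=
  ∃ a b : SEGVert Y₀, Quot.mk (SEGRel Y₀) a = x ∧ Quot.mk (SEGRel Y₀) b = y ∧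
    MutEdge a.1 b.1

/-- The square of the radical: the span of compositions of two non-invertible
maps between summands. -/
def RadSq (k : Type*) [Field k] [CategoryTheory.Linear k PP] {n : ℕ}
    (Y : Fin n → PP) (a b : Fin n) : Submodule k (Y a ⟶ Y b) :=
  Submodule.span k {f : Y a ⟶ Y b | ∃ (l : Fin n) (u : Y a ⟶ Y l) (v : Y l ⟶ Y b),
    ¬ IsIso u ∧ ¬ IsIso v ∧ f = u ≫ v}

/-- The dimension of the space `Irr(Y a, Y b)` of irreducible maps. -/
noncomputable def IrrDim (k : Type*) [Field k] [CategoryTheory.Linear k PP] {n : ℕ}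
    (Y : Fin n → PP) (a b : Fin n) : ℕ :=
  Module.finrank k ((Y a ⟶ Y b) ⧸ RadSq k Y a b)

end SiltingDefs

open Paper

universe v u v₁ u₁

/-!
The essential image of `ℓ` is, by hypothesis, the left orthogonal `⊥V`, which is a thick
subcategory; in particular it is closed under direct summands. A fully faithful triangulated
functor whose image is closed under summands preserves and reflects indecomposability,
pairwise non-isomorphism and the vanishing of `Hom^{>0}`, and thick closures of objects in the
image may be computed on either side of it. So `ℓ` carries silting families of `per(eΓe)`, whose
thick closure is everything, exactly to partial silting families of `per(Γ)` whose thick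
closure is the whole image `⊥V`.
-/

namespace CategoryTheory

variable {C : Type u} [Category.{v} C] {D : Type u₁} [Category.{v₁} D]

lemma Functor.isZero_obj_iff_of_faithful [HasZeroMorphisms C] [HasZeroMorphisms D] (F : C ⥤ D)
    [F.PreservesZeroMorphisms] [F.Faithful] {X : C} : IsZero (F.obj X) ↔ IsZero X := by
  simp only [IsZero.iff_id_eq_zero, ← F.map_id, F.map_eq_zero_iff]

instance ObjectProperty.isStableUnderRetracts_leftOrthogonal [HasZeroMorphisms C]
    (V : ObjectProperty C) : V.leftOrthogonal.IsStableUnderRetracts where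
  of_retract r h _ f hY := by
    simpa using r.i ≫= h (r.r ≫ f) hY

lemma ObjectProperty.leftOrthogonal_iff_forall [HasZeroMorphisms C] (V : ObjectProperty C)
    (X : C) : V.leftOrthogonal X ↔ ∀ Y, V Y → ∀ f : X ⟶ Y, f = 0 :=
  ⟨fun h _ hY f => h f hY, fun h _ f hY => h _ hY f⟩

instance ObjectProperty.isStableUnderRetracts_map (F : C ⥤ D) [F.Full] [F.Faithful]
    [F.essImage.IsStableUnderRetracts] (P : ObjectProperty C) [P.IsStableUnderRetracts] :
    (P.map F).IsStableUnderRetracts where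
  of_retract r := by
    rintro ⟨Y', hY', ⟨e⟩⟩
    obtain ⟨X', ⟨e'⟩⟩ := F.essImage.prop_of_retract r ⟨Y', ⟨e⟩⟩
    refine ⟨X', P.prop_of_retract ⟨F.preimage (e'.hom ≫ r.i ≫ e.inv),
      F.preimage (e.hom ≫ r.r ≫ e'.inv), F.map_injective ?_⟩ hY', ⟨e'⟩⟩
    simp

end CategoryTheory

namespace Paper

section ThickClosure

variable {C : Type u} [Category.{v} C] [Preadditive C] [HasZeroObject C] [HasShift C ℤ]
  [∀ n : ℤ, (shiftFunctor C n).Additive] [Pretriangulated C]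
  {D : Type u₁} [Category.{v₁} D] [Preadditive D] [HasZeroObject D] [HasShift D ℤ]
  [∀ n : ℤ, (shiftFunctor D n).Additive] [Pretriangulated D]

lemma IsThick.isStableUnderShift {V : C → Prop} (hV : IsThick V) :
    ObjectProperty.IsStableUnderShift V ℤ where
  isStableUnderShiftBy n := ⟨fun X hX => hV.shift X n hX⟩

instance (S : C → Prop) : ObjectProperty.IsStableUnderRetracts (ThickClos S) where
  of_retract r h := ThickClos.retract _ _ r.i r.r r.retract h

instance (S : C → Prop) : ObjectProperty.IsTriangulated (ThickClos S) where
  exists_zero := ⟨0, isZero_zero C, ThickClos.zero _ (isZero_zero C)⟩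
  isStableUnderShiftBy n := ⟨fun X hX => ThickClos.shift X n hX⟩
  toIsTriangulatedClosed₂ := .mk' fun _ hT h₁ h₃ => ThickClos.ext _ _ _ _ _ _ hT h₁ h₃

lemma thickClos_le_iff {S Q : ObjectProperty C} [Q.IsTriangulated] [Q.IsStableUnderRetracts] :
    ThickClos S ≤ Q ↔ S ≤ Q := by
  refine ⟨fun h X hX => h X (ThickClos.of X hX), fun hS X hX => ?_⟩
  induction hX with
  | of X hX => exact hS X hX
  | zero X hX => exact Q.prop_of_isZero hX
  | shift X n _ ih => exact Q.le_shift n X ih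
  | ext A E B f g h hT _ _ ihA ihB => exact Q.ext_of_isTriangulatedClosed₂ _ hT ihA ihB
  | retract X Z i p hip _ ih => exact Q.prop_of_retract ⟨i, p, hip⟩ ih

lemma ThickClos.map (F : C ⥤ D) [F.CommShift ℤ] [F.IsTriangulated] {S : ObjectProperty C}
    {S' : ObjectProperty D} (hS : S ≤ S'.inverseImage F) :
    ThickClos S ≤ ObjectProperty.inverseImage (ThickClos S') F := by
  intro X hX
  induction hX with
  | of X hX => exact ThickClos.of _ (hS X hX)
  | zero X hX => exact ThickClos.zero _ (F.map_isZero hX)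
  | shift X n _ ih =>
      exact ObjectProperty.prop_of_iso (ThickClos S') ((F.commShiftIso n).app X).symm
        (ThickClos.shift _ n ih)
  | ext A E B f g h hT _ _ ihA ihB =>
      exact ThickClos.ext _ _ _ _ _ _ (F.map_distinguished _ hT) ihA ihB
  | retract X Z i p hip _ ih =>
      exact ThickClos.retract _ _ (F.map i) (F.map p) (by rw [← F.map_comp, hip, F.map_id]) ih

lemma map_thickClos_le (F : C ⥤ D) [F.CommShift ℤ] [F.IsTriangulated] {S : ObjectProperty C}
    {S' : ObjectProperty D} (hS : S ≤ S'.inverseImage F) :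
    ObjectProperty.map (ThickClos S) F ≤ ThickClos S' := by
  rintro Y ⟨X, hX, ⟨e⟩⟩
  exact ObjectProperty.prop_of_iso (ThickClos S') e (ThickClos.map F hS X hX)

lemma thickClos_le_map (F : C ⥤ D) [F.CommShift ℤ] [F.IsTriangulated] [F.Full] [F.Faithful]
    [F.essImage.IsStableUnderRetracts] {S : ObjectProperty C} {S' : ObjectProperty D}
    (hS : S' ≤ S.map F) : ThickClos S' ≤ ObjectProperty.map (ThickClos S) F :=
  thickClos_le_iff.2 (hS.trans (ObjectProperty.map_monotone (fun X => ThickClos.of X) F))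

end ThickClosure

end Paper

section PartialSilting

variable {C : Type u} [Category.{v} C] [Preadditive C] {D : Type u₁} [Category.{v₁} D]
  [Preadditive D]

lemma IndecObj.of_iso [HasBinaryBiproducts C] {X Y : C} (e : X ≅ Y) (h : IndecObj X) :
    IndecObj Y :=
  ⟨fun hY => h.1 (hY.of_iso e), fun A B e' => h.2 A B (e ≪≫ e')⟩

lemma NoPosExt.of_iso [HasShift C ℤ] {X X' Y Y' : C} (eX : X ≅ X') (eY : Y ≅ Y')
    (h : NoPosExt X Y) : NoPosExt X' Y' := by
  intro m hm f
  have h₀ := h m hm (eX.hom ≫ f ≫ (shiftFunctor C m).map eY.inv)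
  rwa [← cancel_epi eX.hom, ← cancel_mono ((shiftFunctor C m).map eY.inv), comp_zero,
    zero_comp, Category.assoc]

lemma IsPartialSiltingFam.of_iso [HasShift C ℤ] [HasBinaryBiproducts C] {n : ℕ}
    {Y Y' : Fin n → C} (e : ∀ i, Y i ≅ Y' i) (h : IsPartialSiltingFam Y) :
    IsPartialSiltingFam Y' where
  indec i := (h.indec i).of_iso (e i)
  pairwise_noniso i j hij :=
    ⟨fun e' => (h.pairwise_noniso i j hij).false (e i ≪≫ e' ≪≫ (e j).symm)⟩
  no_pos_ext i j := (h.no_pos_ext i j).of_iso (e i) (e j)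

namespace CategoryTheory.Functor

variable (F : C ⥤ D) [F.Additive] [F.Full] [F.Faithful]

lemma indecObj_map_iff [HasBinaryBiproducts C] [HasBinaryBiproducts D]
    [F.essImage.IsStableUnderRetracts] {X : C} : IndecObj (F.obj X) ↔ IndecObj X := by
  have := preservesBinaryBiproducts_of_preservesBiproducts F
  refine ⟨fun h => ⟨fun hX => h.1 (F.map_isZero hX), fun A B e => ?_⟩,
    fun h => ⟨fun hX => h.1 (F.isZero_obj_iff_of_faithful.1 hX), fun A B e => ?_⟩⟩
  · simpa only [F.isZero_obj_iff_of_faithful] using h.2 _ _ (F.mapIso e ≪≫ F.mapBiprod A B)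
  · obtain ⟨A', ⟨eA⟩⟩ :=
      ObjectProperty.IsStableUnderRetracts.of_biprod_left F.essImage ⟨X, ⟨e⟩⟩
    obtain ⟨B', ⟨eB⟩⟩ :=
      ObjectProperty.IsStableUnderRetracts.of_biprod_right F.essImage ⟨X, ⟨e⟩⟩
    refine (h.2 A' B' (F.preimageIso (e ≪≫ biprod.mapIso eA.symm eB.symm ≪≫
      (F.mapBiprod A' B').symm))).imp (fun h' => ?_) (fun h' => ?_)
    · exact (F.map_isZero h').of_iso eA.symm
    · exact (F.map_isZero h').of_iso eB.symm

lemma noPosExt_map_iff [HasShift C ℤ] [HasShift D ℤ] [F.CommShift ℤ] {X Y : C} :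
    NoPosExt (F.obj X) (F.obj Y) ↔ NoPosExt X Y := by
  refine ⟨fun h m hm f => ?_, fun h m hm f => ?_⟩
  · have h₀ := h m hm (F.map f ≫ (F.commShiftIso m).hom.app Y)
    rwa [Preadditive.IsIso.comp_right_eq_zero, F.map_eq_zero_iff] at h₀
  · have h₀ := h m hm (F.preimage (f ≫ (F.commShiftIso m).inv.app Y))
    rwa [← F.map_eq_zero_iff, F.map_preimage, Preadditive.IsIso.comp_right_eq_zero] at h₀

lemma isPartialSiltingFam_map_iff [HasShift C ℤ] [HasShift D ℤ] [F.CommShift ℤ]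
    [HasBinaryBiproducts C] [HasBinaryBiproducts D] [F.essImage.IsStableUnderRetracts]
    {n : ℕ} {Y : Fin n → C} :
    IsPartialSiltingFam (fun i => F.obj (Y i)) ↔ IsPartialSiltingFam Y := by
  refine ⟨fun h => ⟨fun i => ?_, fun i j hij => ?_, fun i j => ?_⟩,
    fun h => ⟨fun i => ?_, fun i j hij => ?_, fun i j => ?_⟩⟩
  · exact (F.indecObj_map_iff).1 (h.indec i)
  · exact ⟨fun e => (h.pairwise_noniso i j hij).false (F.mapIso e)⟩
  · exact (F.noPosExt_map_iff).1 (h.no_pos_ext i j)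
  · exact (F.indecObj_map_iff).2 (h.indec i)
  · exact ⟨fun e => (h.pairwise_noniso i j hij).false (F.preimageIso e)⟩
  · exact (F.noPosExt_map_iff).2 (h.no_pos_ext i j)

end CategoryTheory.Functor

end PartialSilting

/-- There is a canonical bijection between silting objects
of `per(eΓe)` and `V`-perpendicular partial silting objects of `per(Γ)`,
where `V = pvd(Γ_I)`: the fully faithful functor `ℓ` sends silting objects of
`per(eΓe)` to partial silting objects `X` of `per(Γ)` with `Hom(X, V) = 0`
and `thick(X) = ^⊥V`, and every such partial silting object arises this way
(uniquely, `ℓ` being fully faithful). -/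
theorem statement18
    {P : Type u} [Category.{v} P] [Preadditive P] [HasZeroObject P] [HasShift P ℤ]
    [∀ n : ℤ, (shiftFunctor P n).Additive] [Pretriangulated P] [HasBinaryBiproducts P]
    {PE : Type u₁} [Category.{v₁} PE] [Preadditive PE] [HasZeroObject PE] [HasShift PE ℤ]
    [∀ n : ℤ, (shiftFunctor PE n).Additive] [Pretriangulated PE] [HasBinaryBiproducts PE]
    (ℓ : PE ⥤ P) [ℓ.CommShift ℤ] [ℓ.IsTriangulated] [ℓ.Full] [ℓ.Faithful]
    (V : P → Prop) (hV : IsThick V)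
    (horth : ∀ Z : P, EssIm ℓ Z ↔ ∀ Y : P, V Y → ∀ f : Z ⟶ Y, f = 0)
    {m : ℕ} :
    (∀ Y : Fin m → PE, IsSiltingFam Y →
      (IsPartialSiltingFam (fun i => ℓ.obj (Y i)) ∧
       (∀ (i : Fin m) (v : P), V v → ∀ f : ℓ.obj (Y i) ⟶ v, f = 0) ∧
       (∀ Z : P, ThickClos (fun W => ∃ i, W = ℓ.obj (Y i)) Z ↔
         ∀ v : P, V v → ∀ f : Z ⟶ v, f = 0))) ∧
    (∀ X : Fin m → P,
      (IsPartialSiltingFam X ∧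
       (∀ (i : Fin m) (v : P), V v → ∀ f : X i ⟶ v, f = 0) ∧
       (∀ Z : P, ThickClos (fun W => ∃ i, W = X i) Z ↔
         ∀ v : P, V v → ∀ f : Z ⟶ v, f = 0)) →
      ∃ Y : Fin m → PE, IsSiltingFam Y ∧ ∀ i, Nonempty (ℓ.obj (Y i) ≅ X i)) ∧
    (∀ Y Y' : Fin m → PE, IsSiltingFam Y → IsSiltingFam Y' →
      (∀ i, Nonempty (ℓ.obj (Y i) ≅ ℓ.obj (Y' i))) → ∀ i, Nonempty (Y i ≅ Y' i)) := by
  have := hV.isStableUnderShift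
  have hess : ℓ.essImage = ObjectProperty.leftOrthogonal V :=
    funext fun Z => propext ((horth Z).trans (ObjectProperty.leftOrthogonal_iff_forall V Z).symm)
  have : ℓ.essImage.IsStableUnderRetracts := hess ▸ inferInstance
  have hperp (W : PE) : ∀ v : P, V v → ∀ f : ℓ.obj W ⟶ v, f = 0 :=
    (horth _).1 (ℓ.obj_mem_essImage W)
  refine ⟨fun Y hY => ⟨ℓ.isPartialSiltingFam_map_iff.2 hY.1, fun i => hperp (Y i), fun Z => ?_⟩,
    fun X hX => ?_, fun Y Y' _ _ h i => (h i).map ℓ.preimageIso⟩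
  · refine ⟨fun hZ => (horth Z).1 ?_, fun hZ => ?_⟩
    · refine thickClos_le_iff (Q := ℓ.essImage).2 ?_ Z hZ
      rintro _ ⟨i, rfl⟩
      exact ℓ.obj_mem_essImage (Y i)
    · obtain ⟨W, ⟨e⟩⟩ := (horth Z).2 hZ
      refine map_thickClos_le ℓ (S := fun W => ∃ i, W = Y i) ?_ Z ⟨W, hY.2 W, ⟨e⟩⟩
      rintro _ ⟨i, rfl⟩
      exact ⟨i, rfl⟩
  · obtain ⟨hX, hXperp, hXthick⟩ := hX
    choose Y e using fun i => (horth (X i)).2 (hXperp i)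
    replace e : ∀ i, ℓ.obj (Y i) ≅ X i := fun i => (e i).some
    refine ⟨Y, ⟨ℓ.isPartialSiltingFam_map_iff.1 (hX.of_iso fun i => (e i).symm), fun W => ?_⟩,
      fun i => ⟨e i⟩⟩
    have hW := (hXthick (ℓ.obj W)).2 (hperp W)
    obtain ⟨W', hW', ⟨e'⟩⟩ := thickClos_le_map ℓ (S := fun W => ∃ i, W = Y i)
      (by rintro _ ⟨i, rfl⟩; exact ⟨Y i, ⟨i, rfl⟩, ⟨e i⟩⟩) _ hW
    exact ObjectProperty.prop_of_iso _ (ℓ.preimageIso e') hW'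
end
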